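/- Define Φ(x̂, θ̂, λ̂, ν̂) = ∑_i f_i(x_i) + (x̂ − x̂*)ᵀθ̂ + ℏ x̂ᵀ𝐋x̂ + ∑_{i,j} λ_{ij} g_{ij}(x_i) + ∑_{i,j} ν_{ij} h_{ij}(x_i), where f_i, g_{ij} are convex differentiable, h_{ij} affine, 𝐋 PSD with 𝐋x̂* = 0, ℏ ≥ 0, x̂* = 𝟙_N ⊗ x*, and (x*, λ*, ν*) satisfies the KKT conditions for minimizing ∑f_i subject to g_{ij} ≤ 0, h_{ij} = 0. Let θ̂* = −(∇F(x̂*) + λ*⊙∇G(x̂*) + ν*⊙∇H(x̂*)). Then for all x̂ ∈ ℝ^{nN}, θ̂ ∈ ℝ^{nN}, λ̂ ⪰ 0, ν̂: Φ(x̂*, θ̂, λ̂, ν̂) ≤ Φ(x̂*, θ̂*, λ̂*, ν̂*) ≤ Φ(x̂, θ̂*, λ̂*, ν̂*). -/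

import Mathlib

/-!
At `x̂ = x̂*` the term `(x̂ - x̂*)ᵀθ̂` vanishes and, since `𝐋x̂* = 0`, so does the quadratic term;
the first inequality is then `∑ λ g(x*) ≤ 0 = ∑ λ* g(x*)` (feasibility and complementary slackness).
For the second, `θ̂*` makes agent `i`'s part of `Φ(·, θ̂*, λ̂*, ν̂*)` equal to its local Lagrangian
minus the linearisation of that Lagrangian at `x*`; by the first-order condition for convex
functions it is at least its value at `x*`, which is `f_i(x*)`. The remaining term `ℏ x̂ᵀ𝐋x̂` is
nonnegative because `𝐋` is positive semidefinite.
-/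

open RealInnerProductSpace Finset Matrix

theorem ConvexOn.add_le_of_hasFDerivAt {E : Type*} [NormedAddCommGroup E] [NormedSpace ℝ E]
    {s : Set E} {f : E → ℝ} {f' : E →L[ℝ] ℝ} {x y : E} (hf : ConvexOn ℝ s f)
    (hx : x ∈ s) (hy : y ∈ s) (hf' : HasFDerivAt f f' x) :
    f x + f' (y - x) ≤ f y := by
  set ℓ := AffineMap.lineMap (k := ℝ) x y
  have hline : ConvexOn ℝ (ℓ ⁻¹' s) (f ∘ ℓ) := hf.comp_affineMap ℓ
  have hderiv : HasDerivAt (f ∘ ℓ) (f' (y - x)) 0 := by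
    rw [← AffineMap.lineMap_apply_zero x y (k := ℝ)] at hf'
    exact hf'.comp_hasDerivAt 0 AffineMap.hasDerivAt_lineMap
  have hslope := hline.le_slope_of_hasDerivAt (x := 0) (y := 1) (by simpa [ℓ] using hx)
    (by simpa [ℓ] using hy) one_pos hderiv
  simp only [ℓ, Function.comp_apply, AffineMap.lineMap_apply_zero, AffineMap.lineMap_apply_one,
    slope_def_field, sub_zero, div_one, map_sub] at hslope
  rw [map_sub]
  linarith

theorem ConvexOn.add_inner_le_of_hasGradientAt {E : Type*} [NormedAddCommGroup E]
    [InnerProductSpace ℝ E] [CompleteSpace E] {s : Set E} {f : E → ℝ} {f' x y : E}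
    (hf : ConvexOn ℝ s f) (hx : x ∈ s) (hy : y ∈ s) (hf' : HasGradientAt f f' x) :
    f x + ⟪f', y - x⟫ ≤ f y :=
  hf.add_le_of_hasFDerivAt hx hy hf'.hasFDerivAt

theorem Matrix.PosSemidef.sum_mul_inner_nonneg {ι E : Type*} [Fintype ι] [NormedAddCommGroup E]
    [InnerProductSpace ℝ E] {L : Matrix ι ι ℝ} (hL : L.PosSemidef) (x : ι → E) :
    0 ≤ ∑ i, ∑ j, L i j * ⟪x i, x j⟫ := by
  -- `L = ∑ₖ vₖ vₖᵀ` turns the form into the sum of the squares `‖∑ᵢ vₖᵢ • xᵢ‖²`.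
  obtain ⟨m, v, rfl⟩ := posSemidef_iff_eq_sum_vecMulVec.mp hL
  have hsq : ∑ i, ∑ j, (∑ k, vecMulVec (v k) (star (v k))) i j * ⟪x i, x j⟫
      = ∑ k, ⟪∑ i, v k i • x i, ∑ j, v k j • x j⟫ := by
    simp only [Matrix.sum_apply, vecMulVec_apply, star_trivial, Finset.sum_mul]
    rw [sum_comm_cycle]
    simp only [sum_inner, inner_sum, real_inner_smul_right, mul_assoc, mul_left_comm,
      real_inner_comm]
  rw [hsq]
  exact sum_nonneg fun k _ => real_inner_self_nonneg

theorem le_lagrangian_add_inner_of_kkt {E ι κ : Type*} [NormedAddCommGroup E]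
    [InnerProductSpace ℝ E] [CompleteSpace E] [Fintype ι] [Fintype κ] {S : Set E}
    {f : E → ℝ} {g : ι → E → ℝ} {h : κ → E → ℝ} {f' : E} {g' : ι → E} {h' : κ → E}
    {lam : ι → ℝ} {nu : κ → ℝ} {x₀ y : E} (hx₀ : x₀ ∈ S) (hy : y ∈ S)
    (hf : ConvexOn ℝ S f) (hf' : HasGradientAt f f' x₀)
    (hg : ∀ j, ConvexOn ℝ S (g j)) (hg' : ∀ j, HasGradientAt (g j) (g' j) x₀)
    (hh : ∀ j z, h j z - h j x₀ = ⟪h' j, z - x₀⟫) (hhx₀ : ∀ j, h j x₀ = 0)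
    (hlam : ∀ j, 0 ≤ lam j) (hslack : ∀ j, lam j * g j x₀ = 0) :
    f x₀ ≤ f y + ⟪y - x₀, -(f' + ∑ j, lam j • g' j + ∑ j, nu j • h' j)⟫
      + ∑ j, lam j * g j y + ∑ j, nu j * h j y := by
  have hfy := hf.add_inner_le_of_hasGradientAt hx₀ hy hf'
  have hgy : ∀ j, lam j * ⟪g' j, y - x₀⟫ ≤ lam j * g j y := fun j => by
    have := (hg j).add_inner_le_of_hasGradientAt hx₀ hy (hg' j)
    nlinarith [hlam j, hslack j]
  have hhy : ∀ j, nu j * h j y = nu j * ⟪h' j, y - x₀⟫ := fun j => by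
    rw [← hh j y, hhx₀ j, sub_zero]
  rw [real_inner_comm]
  simp only [inner_neg_left, inner_add_left, sum_inner, real_inner_smul_left, hhy]
  linarith [sum_le_sum fun j (_ : j ∈ univ) => hgy j]

theorem stmt14_general (n N : ℕ) (r s : Fin N → ℕ)
    (f : Fin N → EuclideanSpace ℝ (Fin n) → ℝ)
    (f' : Fin N → EuclideanSpace ℝ (Fin n) → EuclideanSpace ℝ (Fin n))
    (g : (i : Fin N) → Fin (r i) → EuclideanSpace ℝ (Fin n) → ℝ)
    (g' : (i : Fin N) → Fin (r i) → EuclideanSpace ℝ (Fin n) → EuclideanSpace ℝ (Fin n))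
    (h : (i : Fin N) → Fin (s i) → EuclideanSpace ℝ (Fin n) → ℝ)
    (h' : (i : Fin N) → Fin (s i) → EuclideanSpace ℝ (Fin n))
    (hf_conv : ∀ i, ConvexOn ℝ Set.univ (f i))
    (hf_grad : ∀ i x, HasGradientAt (f i) (f' i x) x)
    (hg_conv : ∀ i j, ConvexOn ℝ Set.univ (g i j))
    (hg_grad : ∀ i j x, HasGradientAt (g i j) (g' i j x) x)
    (h_affine : ∀ i j x y, h i j x - h i j y = ⟪h' i j, x - y⟫)
    (L : Matrix (Fin N) (Fin N) ℝ) (hL : L.PosSemidef) (ℏ : ℝ) (hℏ : 0 ≤ ℏ)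
    (xstar : EuclideanSpace ℝ (Fin n))
    (hLxstar : ∀ i, (∑ j, L i j) • xstar = (0 : EuclideanSpace ℝ (Fin n)))
    (lamstar : (i : Fin N) → Fin (r i) → ℝ) (nustar : (i : Fin N) → Fin (s i) → ℝ)
    (hKKT1 : ∀ i j, g i j xstar ≤ 0)
    (hKKT2 : ∀ i j, h i j xstar = 0)
    (hKKT3 : ∀ i j, 0 ≤ lamstar i j)
    (hKKT4 : ∀ i j, lamstar i j * g i j xstar = 0) :
    let Φ : (Fin N → EuclideanSpace ℝ (Fin n)) → (Fin N → EuclideanSpace ℝ (Fin n)) →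
        ((i : Fin N) → Fin (r i) → ℝ) → ((i : Fin N) → Fin (s i) → ℝ) → ℝ :=
      fun x θ lam nu => (∑ i, f i (x i)) + (∑ i, ⟪x i - xstar, θ i⟫)
        + ℏ * ∑ i, ∑ j, L i j * ⟪x i, x j⟫
        + ∑ i, ∑ j, lam i j * g i j (x i) + ∑ i, ∑ j, nu i j * h i j (x i)
    let θstar : Fin N → EuclideanSpace ℝ (Fin n) := fun i =>
      -(f' i xstar + ∑ j, lamstar i j • g' i j xstar + ∑ j, nustar i j • h' i j)
    ∀ (x θ : Fin N → EuclideanSpace ℝ (Fin n))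
      (lam : (i : Fin N) → Fin (r i) → ℝ) (nu : (i : Fin N) → Fin (s i) → ℝ),
      (∀ i j, 0 ≤ lam i j) →
      Φ (fun _ => xstar) θ lam nu ≤ Φ (fun _ => xstar) θstar lamstar nustar ∧
        Φ (fun _ => xstar) θstar lamstar nustar ≤ Φ x θstar lamstar nustar := by
  intro Φ θstar x θ lam nu hlam
  have hquad : ∑ i, ∑ j, L i j * ⟪xstar, xstar⟫ = 0 := sum_eq_zero fun i _ => by
    rw [← sum_mul, ← real_inner_smul_left, hLxstar i, inner_zero_left]
  have hslack : ∑ i, ∑ j, lamstar i j * g i j xstar = 0 :=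
    sum_eq_zero fun i _ => sum_eq_zero fun j _ => hKKT4 i j
  have heq : ∀ nu : (i : Fin N) → Fin (s i) → ℝ, ∑ i, ∑ j, nu i j * h i j xstar = 0 :=
    fun nu => sum_eq_zero fun i _ => sum_eq_zero fun j _ => by rw [hKKT2 i j, mul_zero]
  have hineq : ∑ i, ∑ j, lam i j * g i j xstar ≤ 0 :=
    sum_nonpos fun i _ => sum_nonpos fun j _ =>
      mul_nonpos_of_nonneg_of_nonpos (hlam i j) (hKKT1 i j)
  have hagents := sum_le_sum fun i (_ : i ∈ univ) =>
    le_lagrangian_add_inner_of_kkt (Set.mem_univ _) (Set.mem_univ (x i)) (hf_conv i)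
      (hf_grad i xstar) (hg_conv i) (fun j => hg_grad i j xstar) (fun j y => h_affine i j y xstar)
      (hKKT2 i) (hKKT3 i) (hKKT4 i) (nu := nustar i)
  have hQ := mul_nonneg hℏ (hL.sum_mul_inner_nonneg x)
  simp only [Φ, sub_self, inner_zero_left, sum_const_zero, add_zero, hquad, hslack, heq]
  simp only [sum_add_distrib] at hagents
  exact ⟨by linarith, by linarith⟩

/-- Saddle point property of the modified Lagrangian
`Φ(x̂,θ̂,λ̂,ν̂) = ∑ f_i(x_i) + (x̂-x̂*)ᵀθ̂ + ℏ x̂ᵀ𝐋x̂ + ∑ λ_{ij} g_{ij}(x_i)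
  + ∑ ν_{ij} h_{ij}(x_i)` at `(x̂*, θ̂*, λ̂*, ν̂*)`. -/
theorem stmt14 (n N : ℕ) (r s : Fin N → ℕ)
    (f : Fin N → EuclideanSpace ℝ (Fin n) → ℝ)
    (f' : Fin N → EuclideanSpace ℝ (Fin n) → EuclideanSpace ℝ (Fin n))
    (g : (i : Fin N) → Fin (r i) → EuclideanSpace ℝ (Fin n) → ℝ)
    (g' : (i : Fin N) → Fin (r i) → EuclideanSpace ℝ (Fin n) → EuclideanSpace ℝ (Fin n))
    (h : (i : Fin N) → Fin (s i) → EuclideanSpace ℝ (Fin n) → ℝ)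
    (h' : (i : Fin N) → Fin (s i) → EuclideanSpace ℝ (Fin n))
    (hf_conv : ∀ i, ConvexOn ℝ Set.univ (f i))
    (hf_grad : ∀ i x, HasGradientAt (f i) (f' i x) x)
    (hg_conv : ∀ i j, ConvexOn ℝ Set.univ (g i j))
    (hg_grad : ∀ i j x, HasGradientAt (g i j) (g' i j x) x)
    (h_affine : ∀ i j x y, h i j x - h i j y = ⟪h' i j, x - y⟫)
    (L : Matrix (Fin N) (Fin N) ℝ) (hL : L.PosSemidef) (ℏ : ℝ) (hℏ : 0 ≤ ℏ)
    (xstar : EuclideanSpace ℝ (Fin n))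
    (hLxstar : ∀ i, (∑ j, L i j) • xstar = (0 : EuclideanSpace ℝ (Fin n)))
    (lamstar : (i : Fin N) → Fin (r i) → ℝ) (nustar : (i : Fin N) → Fin (s i) → ℝ)
    (hKKT1 : ∀ i j, g i j xstar ≤ 0)
    (hKKT2 : ∀ i j, h i j xstar = 0)
    (hKKT3 : ∀ i j, 0 ≤ lamstar i j)
    (hKKT4 : ∀ i j, lamstar i j * g i j xstar = 0)
    (hKKT5 : ∑ i, f' i xstar + ∑ i, ∑ j, lamstar i j • g' i j xstar
        + ∑ i, ∑ j, nustar i j • h' i j = 0) :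
    let Φ : (Fin N → EuclideanSpace ℝ (Fin n)) → (Fin N → EuclideanSpace ℝ (Fin n)) →
        ((i : Fin N) → Fin (r i) → ℝ) → ((i : Fin N) → Fin (s i) → ℝ) → ℝ :=
      fun x θ lam nu => (∑ i, f i (x i)) + (∑ i, ⟪x i - xstar, θ i⟫)
        + ℏ * ∑ i, ∑ j, L i j * ⟪x i, x j⟫
        + ∑ i, ∑ j, lam i j * g i j (x i) + ∑ i, ∑ j, nu i j * h i j (x i)
    let θstar : Fin N → EuclideanSpace ℝ (Fin n) := fun i =>
      -(f' i xstar + ∑ j, lamstar i j • g' i j xstar + ∑ j, nustar i j • h' i j)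
    ∀ (x θ : Fin N → EuclideanSpace ℝ (Fin n))
      (lam : (i : Fin N) → Fin (r i) → ℝ) (nu : (i : Fin N) → Fin (s i) → ℝ),
      (∀ i j, 0 ≤ lam i j) →
      Φ (fun _ => xstar) θ lam nu ≤ Φ (fun _ => xstar) θstar lamstar nustar ∧
        Φ (fun _ => xstar) θstar lamstar nustar ≤ Φ x θstar lamstar nustar :=
  stmt14_general n N r s f f' g g' h h' hf_conv hf_grad hg_conv hg_grad h_affine L hL ℏ hℏ xstar
    hLxstar lamstar nustar hKKT1 hKKT2 hKKT3 hKKT4
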